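/- For sl_2, the dominant monomials of χ_q(W_{k+1,a})·χ_q(W_{k-1,aq^2}) are exactly M, M A_{aq^{2k-1}}^{-1}, ..., M A_{aq^{2k-1}}^{-1}···A_{aq^3}^{-1} where M = m_{k+1,a} m_{k-1,aq^2} = m_{k,a}m_{k,aq^2}, each with coefficient 1; in particular M A_{aq^{2k-1}}^{-1}···A_{aq}^{-1} is a dominant monomial of χ_q(W_{k,a})χ_q(W_{k,aq^2}) but not of χ_q(W_{k+1,a})χ_q(W_{k-1,aq^2}). -/

import Mathlib

noncomputable section

/-- Laurent monomials in the variables `Y_b`, `b ∈ ℂˣ`, written additively: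
a monomial is its finitely supported exponent function. -/
abbrev Mon : Type := ℂˣ →₀ ℤ

/-- The Laurent polynomial ring `ℤ[Y_b^±]`. -/
abbrev Rng : Type := AddMonoidAlgebra ℤ Mon

/-- The variable `Y_b` as a monomial. -/
def Y (b : ℂˣ) : Mon := Finsupp.single b 1

/-- A monomial viewed as an element of the Laurent polynomial ring. -/
def X (m : Mon) : Rng := AddMonoidAlgebra.single m 1

/-- The monomial `A_b = Y_{bq⁻¹} Y_{bq}` (sl₂ case). -/
def Amon (q b : ℂˣ) : Mon := Y (b * q⁻¹) + Y (b * q)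

/-- The highest weight monomial `m_{k,a} = Y_a Y_{aq²} ⋯ Y_{aq^{2(k-1)}}`. -/
def mka (q : ℂˣ) (k : ℕ) (a : ℂˣ) : Mon := ∑ s ∈ Finset.range k, Y (a * q ^ (2 * s))

/-- The normalized q-character of the sl₂ Kirillov-Reshetikhin module, given by the
nested formula `1 + A_{aq^{2k-1}}⁻¹(1 + A_{aq^{2k-3}}⁻¹(1 + ⋯ (1 + A_{aq}⁻¹)⋯))`. -/
def Nchi (q : ℂˣ) : ℕ → ℂˣ → Rng
  | 0, _ => 1
  | (k+1), a => 1 + X (-(Amon q (a * q ^ (2 * k + 1)))) * Nchi q k a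

/-- The q-character `χ_q(W_{k,a}) = m_{k,a}(1 + A_{aq^{2k-1}}⁻¹(1 + ⋯ (1 + A_{aq}⁻¹)⋯))`. -/
def chiW (q : ℂˣ) (k : ℕ) (a : ℂˣ) : Rng := X (mka q k a) * Nchi q k a

/-- A monomial `m ≠ 1` is right-negative if for each `a`, at the maximal `q`-power shift
`L` where `m` is supported on `a q^L`, the exponent is negative. -/
def RightNeg (q : ℂˣ) (m : Mon) : Prop :=
  m ≠ 0 ∧ ∀ (a : ℂˣ) (L : ℤ), m (a * q ^ L) ≠ 0 →
    (∀ l : ℤ, L < l → m (a * q ^ l) = 0) → m (a * q ^ L) < 0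

/-- A monomial is dominant if all its exponents are nonnegative. -/
def Dominant (m : Mon) : Prop := ∀ b, 0 ≤ m b

/-!
Expanding the nested formula, `χ_q(W_{n,b})` is the sum of the `n + 1` monomials
`m_{n,b} A_{bq^{2n-1}}⁻¹ ⋯ A_{bq^{2n-2s+1}}⁻¹`, `s ≤ n`. In `χ_q(W_{k+1,a}) χ_q(W_{k-1,aq²})`, every
product using the factor `A_{aq^{2k+1}}⁻¹` of the first character has exponent `-1` at
`Y_{aq^{2k+2}}`, so it is not dominant. The other products are `M A_{aq^{2k-1}}⁻¹ ⋯ A_{aq^{2k-2u+1}}⁻¹`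
with `u < k`; telescoping `A_{bq} = Y_b Y_{bq²}` shows they equal `m_{k-u,a} m_{k-u,aq²}`, so they are
dominant, and they are pairwise distinct because their total degrees `2(k-u)` differ. The string
with `u = k` gives the monomial `1`, which does occur in `χ_q(W_{k,a}) χ_q(W_{k,aq²})`.
-/

open Finset

lemma X_zero : X 0 = 1 := rfl

lemma X_add (m m' : Mon) : X (m + m') = X m * X m' := by
  rw [X, X, X, AddMonoidAlgebra.single_mul_single, one_mul]

lemma coeff_sum_X {ι : Type*} (S : Finset ι) (f : ι → Mon) (m : Mon) :
    (∑ i ∈ S, X (f i)).coeff m = #{i ∈ S | f i = m} := by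
  simp [X, Finsupp.single_apply]

lemma mem_support_sum_X {ι : Type*} (S : Finset ι) (f : ι → Mon) (m : Mon) :
    m ∈ (∑ i ∈ S, X (f i)).coeff.support ↔ ∃ i ∈ S, f i = m := by
  rw [Finsupp.mem_support_iff, coeff_sum_X, Nat.cast_ne_zero, card_ne_zero, filter_nonempty_iff]

def Astring (q b : ℂˣ) (top : ℤ) (r : ℕ) : Mon :=
  ∑ j ∈ range r, Amon q (b * q ^ (top - 2 * (j : ℤ)))

variable {q : ℂˣ}

@[simp] lemma Astring_zero (b : ℂˣ) (top : ℤ) : Astring q b top 0 = 0 := rfl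

lemma Astring_succ (b : ℂˣ) (top : ℤ) (r : ℕ) :
    Astring q b (top + 2) (r + 1) = Amon q (b * q ^ (top + 2)) + Astring q b top r := by
  rw [Astring, Astring, sum_range_succ', add_comm]
  congr 1
  · simp
  · refine sum_congr rfl fun j _ => ?_
    congr 3
    push_cast
    ring

lemma Astring_mul_sq (b : ℂˣ) (top : ℤ) (r : ℕ) :
    Astring q (b * q ^ 2) top r = Astring q b (top + 2) r := by
  refine sum_congr rfl fun j _ => ?_
  rw [mul_assoc, ← zpow_natCast, ← zpow_add]
  congr 3
  push_cast
  ring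

lemma degree_Astring (b : ℂˣ) (top : ℤ) (r : ℕ) : (Astring q b top r).degree = 2 * r := by
  simp [Astring, Amon, Y, mul_comm]

lemma Astring_injective (b : ℂˣ) (top : ℤ) : Function.Injective (Astring q b top) := by
  intro r r' h
  have := congrArg Finsupp.degree h
  simp only [degree_Astring] at this
  omega

lemma Nchi_eq_sum (n : ℕ) (b : ℂˣ) :
    Nchi q n b = ∑ s ∈ range (n + 1), X (-Astring q b (2 * n - 1) s) := by
  induction n with
  | zero => simp [Nchi, X_zero]
  | succ n ih =>
    have htop : 2 * ((n + 1 : ℕ) : ℤ) - 1 = 2 * n - 1 + 2 := by push_cast; ring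
    have hpow : q ^ (2 * n + 1) = q ^ (2 * (n : ℤ) - 1 + 2) := by
      rw [← zpow_natCast]; push_cast; ring_nf
    rw [Nchi, ih, mul_sum, sum_range_succ' _ (n + 1), htop, hpow]
    simp only [Astring_succ, Astring_zero, neg_zero, X_zero, neg_add, X_add]
    rw [add_comm]

lemma chiW_eq_sum (n : ℕ) (b : ℂˣ) :
    chiW q n b = ∑ s ∈ range (n + 1), X (mka q n b - Astring q b (2 * n - 1) s) := by
  simp only [chiW, Nchi_eq_sum, mul_sum, ← X_add, sub_eq_add_neg]

lemma chiW_mul_chiW (n n' : ℕ) (b b' : ℂˣ) :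
    chiW q n b * chiW q n' b' = ∑ p ∈ range (n + 1) ×ˢ range (n' + 1),
      X (mka q n b + mka q n' b' - Astring q b (2 * n - 1) p.1
        - Astring q b' (2 * n' - 1) p.2) := by
  rw [chiW_eq_sum, chiW_eq_sum, sum_mul_sum, sum_product]
  simp only [← X_add]
  congr! 3
  abel

lemma mka_succ (n : ℕ) (b : ℂˣ) : mka q (n + 1) b = mka q n b + Y (b * q ^ (2 * n)) :=
  sum_range_succ _ _

lemma Amon_mul_self (c : ℂˣ) : Amon q (c * q) = Y c + Y (c * q ^ 2) := by
  rw [Amon, mul_inv_cancel_right, mul_assoc, ← sq]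

lemma mka_add_mka_sq (r t : ℕ) (b : ℂˣ) :
    mka q (r + t) b + mka q (r + t) (b * q ^ 2)
      = mka q r b + mka q r (b * q ^ 2) + Astring q b (2 * (r + t : ℕ) - 1) t := by
  induction t with
  | zero => simp
  | succ t ih =>
    have htop : 2 * ((r + t + 1 : ℕ) : ℤ) - 1 = 2 * (r + t : ℕ) - 1 + 2 := by push_cast; ring
    have hpow : b * q ^ (2 * ((r + t : ℕ) : ℤ) - 1 + 2) = b * q ^ (2 * (r + t)) * q := by
      rw [mul_assoc, ← pow_succ, ← zpow_natCast]; push_cast; ring_nf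
    rw [← add_assoc r t 1, mka_succ, mka_succ, htop, Astring_succ, hpow, Amon_mul_self,
      mul_right_comm b]
    calc _ = mka q (r + t) b + mka q (r + t) (b * q ^ 2) +
          (Y (b * q ^ (2 * (r + t))) + Y (b * q ^ (2 * (r + t)) * q ^ 2)) := by abel
      _ = _ := by rw [ih]; abel

lemma mka_add_mka_sq_sub_Astring {k t : ℕ} (ht : t ≤ k) (b : ℂˣ) :
    mka q k b + mka q k (b * q ^ 2) - Astring q b (2 * k - 1) t
      = mka q (k - t) b + mka q (k - t) (b * q ^ 2) := by
  obtain ⟨r, rfl⟩ := Nat.exists_eq_add_of_le' ht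
  rw [Nat.add_sub_cancel, mka_add_mka_sq, add_sub_cancel_right]

lemma mka_add_mka_sq_eq_Astring (k : ℕ) (b : ℂˣ) :
    mka q k b + mka q k (b * q ^ 2) = Astring q b (2 * k - 1) k := by
  simpa [mka] using mka_add_mka_sq 0 k b (q := q)

lemma dominant_add {m m' : Mon} (hm : Dominant m) (hm' : Dominant m') : Dominant (m + m') :=
  fun b => add_nonneg (hm b) (hm' b)

lemma dominant_mka (n : ℕ) (b : ℂˣ) : Dominant (mka q n b) :=
  (sum_nonneg fun _ _ => Finsupp.single_nonneg.2 zero_le_one : 0 ≤ mka q n b)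

lemma dominant_mka_add_mka_sq_sub_Astring {k t : ℕ} (ht : t ≤ k) (b : ℂˣ) :
    Dominant (mka q k b + mka q k (b * q ^ 2) - Astring q b (2 * k - 1) t) := by
  rw [mka_add_mka_sq_sub_Astring ht]
  exact dominant_add (dominant_mka _ _) (dominant_mka _ _)

lemma zpow_apply_Y (hq : ∀ n : ℤ, n ≠ 0 → q ^ n ≠ 1) (a : ℂˣ) (m n : ℤ) :
    Y (a * q ^ m) (a * q ^ n) = if m = n then 1 else 0 := by
  rw [Y, Finsupp.single_apply]
  refine if_congr ⟨fun h => ?_, fun h => h ▸ rfl⟩ rfl rfl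
  by_contra hmn
  exact hq (m - n) (sub_ne_zero.2 hmn) (by rw [zpow_sub, mul_left_cancel h, mul_inv_cancel])

lemma Amon_zpow_apply (hq : ∀ n : ℤ, n ≠ 0 → q ^ n ≠ 1) (a : ℂˣ) (m n : ℤ) :
    Amon q (a * q ^ m) (a * q ^ n)
      = (if m - 1 = n then 1 else 0) + (if m + 1 = n then 1 else 0) := by
  rw [Amon, mul_assoc, mul_assoc, ← zpow_sub_one, ← zpow_add_one, Finsupp.add_apply,
    zpow_apply_Y hq, zpow_apply_Y hq]

lemma Astring_zpow_apply_of_lt (hq : ∀ n : ℤ, n ≠ 0 → q ^ n ≠ 1) (a : ℂˣ) {top n : ℤ}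
    (h : top + 1 < n) (r : ℕ) : Astring q a top r (a * q ^ n) = 0 := by
  rw [Astring, Finsupp.finsetSum_apply]
  refine sum_eq_zero fun j _ => ?_
  rw [Amon_zpow_apply hq, if_neg (by omega), if_neg (by omega), add_zero]

/-- The exponent of `Y_{aq^{2k+2}}` is `-1`: as `q` is not a root of unity, `A_{aq^{2k+1}}` is the
only factor involving it. -/
lemma not_dominant_sub_Amon_top (hq : ∀ n : ℤ, n ≠ 0 → q ^ n ≠ 1) (k s u : ℕ) (a : ℂˣ) :
    ¬ Dominant (mka q k a + mka q k (a * q ^ 2) - Astring q a (2 * k + 1) (s + 1)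
      - Astring q a (2 * k - 1) u) := by
  intro h
  have hval := h (a * q ^ (2 * (k : ℤ) + 2))
  rw [mka_add_mka_sq_eq_Astring, show 2 * (k : ℤ) + 1 = 2 * k - 1 + 2 by ring, Astring_succ]
    at hval
  simp only [Finsupp.sub_apply, Finsupp.add_apply] at hval
  rw [Amon_zpow_apply hq, if_neg (by omega), if_pos (by ring),
    Astring_zpow_apply_of_lt hq a (by omega), Astring_zpow_apply_of_lt hq a (by omega),
    Astring_zpow_apply_of_lt hq a (by omega)] at hval
  omega

lemma mka_succ_succ_add_mka_sq (n : ℕ) (b : ℂˣ) :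
    mka q (n + 2) b + mka q n (b * q ^ 2) = mka q (n + 1) b + mka q (n + 1) (b * q ^ 2) := by
  rw [mka_succ (n + 1), mka_succ n (b * q ^ 2), mul_assoc, ← pow_add]
  ring_nf
  abel

lemma chiW_succ_mul_chiW_pred {k : ℕ} (hk : 1 ≤ k) (a : ℂˣ) :
    chiW q (k + 1) a * chiW q (k - 1) (a * q ^ 2)
      = ∑ p ∈ range (k + 1) ×ˢ range k, X (mka q k a + mka q k (a * q ^ 2)
            - Astring q a (2 * k + 1) (p.1 + 1) - Astring q a (2 * k - 1) p.2)
        + ∑ u ∈ range k, X (mka q k a + mka q k (a * q ^ 2) - Astring q a (2 * k - 1) u) := by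
  obtain ⟨n, rfl⟩ := Nat.exists_eq_add_of_le' hk
  have htop : 2 * ((n + 1 + 1 : ℕ) : ℤ) - 1 = 2 * (n + 1 : ℕ) + 1 := by push_cast; ring
  have htop' : 2 * (n : ℤ) - 1 + 2 = 2 * (n + 1 : ℕ) - 1 := by push_cast; ring
  rw [chiW_mul_chiW, Nat.add_sub_cancel, mka_succ_succ_add_mka_sq, htop, sum_product,
    sum_range_succ', sum_product]
  simp only [Astring_mul_sq, htop', Astring_zero, sub_zero]

lemma coeff_chiW_succ_mul_chiW_pred_of_dominant (hq : ∀ n : ℤ, n ≠ 0 → q ^ n ≠ 1) {k : ℕ}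
    (hk : 1 ≤ k) (a : ℂˣ) {m : Mon} (hm : Dominant m) :
    (chiW q (k + 1) a * chiW q (k - 1) (a * q ^ 2)).coeff m
      = #{u ∈ range k | mka q k a + mka q k (a * q ^ 2) - Astring q a (2 * k - 1) u = m} := by
  rw [chiW_succ_mul_chiW_pred hk, AddMonoidAlgebra.coeff_add, Finsupp.add_apply, coeff_sum_X,
    coeff_sum_X, filter_false_of_mem, card_empty, Nat.cast_zero, zero_add]
  rintro ⟨s, u⟩ - h
  exact not_dominant_sub_Amon_top hq k s u a (by rwa [h])

lemma coeff_chiW_succ_mul_chiW_pred_sub_Astring (hq : ∀ n : ℤ, n ≠ 0 → q ^ n ≠ 1) {k t : ℕ}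
    (hk : 1 ≤ k) (ht : t ≤ k) (a : ℂˣ) :
    (chiW q (k + 1) a * chiW q (k - 1) (a * q ^ 2)).coeff
        (mka q k a + mka q k (a * q ^ 2) - Astring q a (2 * k - 1) t)
      = if t < k then 1 else 0 := by
  rw [coeff_chiW_succ_mul_chiW_pred_of_dominant hq hk a
    (dominant_mka_add_mka_sq_sub_Astring ht a)]
  simp only [sub_right_inj, (Astring_injective a _).eq_iff, filter_eq', mem_range]
  split_ifs <;> simp

/-- for sl₂ the dominant monomials of `χ_q(W_{k+1,a})·χ_q(W_{k-1,aq²})` are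
exactly `M, M A_{aq^{2k-1}}⁻¹, …, M A_{aq^{2k-1}}⁻¹⋯A_{aq³}⁻¹` with
`M = m_{k+1,a} m_{k-1,aq²} = m_{k,a} m_{k,aq²}`, each with coefficient `1`; in particular
`M A_{aq^{2k-1}}⁻¹⋯A_{aq}⁻¹` is a dominant monomial of `χ_q(W_{k,a})χ_q(W_{k,aq²})` but not
of `χ_q(W_{k+1,a})χ_q(W_{k-1,aq²})`. -/
theorem kr_sl2_dominant_monomials' (q : ℂˣ) (hq : ∀ n : ℤ, n ≠ 0 → q ^ n ≠ 1)
    (k : ℕ) (hk : 1 ≤ k) (a : ℂˣ) :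
    (∀ m : Mon,
        (m ∈ (chiW q (k + 1) a * chiW q (k - 1) (a * q ^ 2)).coeff.support ∧ Dominant m) ↔
          ∃ t ≤ k - 1, m = mka q k a + mka q k (a * q ^ 2)
            - ∑ j ∈ Finset.range t, Amon q (a * q ^ (2 * (k : ℤ) - 1 - 2 * (j : ℤ)))) ∧
      (∀ t ≤ k - 1,
        (chiW q (k + 1) a * chiW q (k - 1) (a * q ^ 2)).coeff
          (mka q k a + mka q k (a * q ^ 2)
            - ∑ j ∈ Finset.range t, Amon q (a * q ^ (2 * (k : ℤ) - 1 - 2 * (j : ℤ)))) = 1) ∧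
      ((mka q k a + mka q k (a * q ^ 2)
            - ∑ j ∈ Finset.range k, Amon q (a * q ^ (2 * (k : ℤ) - 1 - 2 * (j : ℤ))))
          ∈ (chiW q k a * chiW q k (a * q ^ 2)).coeff.support ∧
        Dominant (mka q k a + mka q k (a * q ^ 2)
            - ∑ j ∈ Finset.range k, Amon q (a * q ^ (2 * (k : ℤ) - 1 - 2 * (j : ℤ)))) ∧
        (chiW q (k + 1) a * chiW q (k - 1) (a * q ^ 2)).coeff
          (mka q k a + mka q k (a * q ^ 2)
            - ∑ j ∈ Finset.range k, Amon q (a * q ^ (2 * (k : ℤ) - 1 - 2 * (j : ℤ)))) = 0) := by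
  have hcoeff {t : ℕ} (ht : t ≤ k) := coeff_chiW_succ_mul_chiW_pred_sub_Astring hq hk ht a
  refine ⟨fun m => ⟨fun ⟨hm, hdom⟩ => ?_, ?_⟩, fun t ht => ?_, ?_,
    dominant_mka_add_mka_sq_sub_Astring le_rfl a, (hcoeff le_rfl).trans (if_neg (lt_irrefl k))⟩
  · rw [Finsupp.mem_support_iff, coeff_chiW_succ_mul_chiW_pred_of_dominant hq hk a hdom,
      Nat.cast_ne_zero, card_ne_zero, filter_nonempty_iff] at hm
    obtain ⟨t, ht, rfl⟩ := hm
    exact ⟨t, by have := mem_range.1 ht; omega, rfl⟩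
  · rintro ⟨t, ht, rfl⟩
    refine ⟨Finsupp.mem_support_iff.2 ?_, dominant_mka_add_mka_sq_sub_Astring (by omega) a⟩
    exact (hcoeff (by omega)).trans_ne (by rw [if_pos (by omega)]; exact one_ne_zero)
  · exact (hcoeff (by omega)).trans (if_pos (by omega))
  · rw [chiW_mul_chiW, mem_support_sum_X]
    exact ⟨(k, 0), by simp, by simp [Astring]⟩
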